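/- Let μ₁ and μ₁' be probability measures on a measurable space Y, let κ and κ' be Markov kernels from Y to a measurable space Z, and let P, Q be probability measures on a measurable space Ω₁ and P', Q' probability measures on a measurable space Ω₂. Suppose that T(μ₁, μ₁')(α) ≥ T(P, Q)(α) for all α ∈ [0,1], and that for every y ∈ Y, T(κ(y), κ'(y))(α) ≥ T(P', Q')(α) for all α ∈ [0,1]. Then for every α ∈ [0,1], T(μ₁ ⊗ κ, μ₁' ⊗ κ')(α) ≥ T(P × P', Q × Q')(α), where μ ⊗ κ denotes the measure on Y × Z obtained by composing μ with the kernel κ (the joint distribution of the first output and the second output given the first), and P × P' denotes the product measure. -/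

import Mathlib

open MeasureTheory ProbabilityTheory Filter Set

/-- The trade-off function `T(P,Q)` of two measures. -/
noncomputable def tradeOff {Ω : Type*} [MeasurableSpace Ω] (P Q : Measure Ω) (α : ℝ) : ℝ :=
  sInf {β : ℝ | ∃ φ : Ω → ℝ, Measurable φ ∧ (∀ x, φ x ∈ Set.Icc (0:ℝ) 1) ∧
    (∫ x, φ x ∂P) ≤ α ∧ β = 1 - ∫ x, φ x ∂Q}

/-!
Let `φ` be a test on `Y × Z` of size at most `α` under `μ₁ ⊗ κ`, and let
`a y = ∫ φ (y, ·) dκ(y)` be its first-stage rejection probability. By the hypothesis on the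
kernels, its power under `μ₁' ⊗ κ'` is at most `∫ g (a y) dμ₁'`, where `g = 1 - T(P', Q')` is the
optimal power for `P'` against `Q'`.

Round `a` up to the grid `i / n`. The layers `{y | i < ⌈n a y⌉}` have `μ₁`-masses `Mᵢ`, decreasing
in `i`, and `μ₁'`-masses at most `1 - T(P, Q)(Mᵢ)`. Neyman–Pearson tests `Wᵢ₊₁` for `P` against `Q`
at the levels `Mᵢ` attain this power and are nested, since they threshold the same likelihood
ratio. Running a near-optimal test for `P'` against `Q'` at level `i / n` on the slice
`Wᵢ - Wᵢ₊₁` gives a test on `Ω₁ × Ω₂` of size at most `∫ ⌈n a⌉ / n dμ₁ ≤ α + 1 / n` under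
`P × P'` and, by Abel summation, of power at least `∫ g (⌈n a⌉ / n) dμ₁' - δ` under `Q × Q'`.
Shrinking it by the factor `α / (α + 1 / n)` restores size `α` at a cost `1 / (n α)`; when
`α = 0`, `a` vanishes `μ₁`-a.e. and no shrinking is needed.
-/

section Tests

variable {Ω Ω' : Type*} [MeasurableSpace Ω] [MeasurableSpace Ω'] {φ ψ : Ω → ℝ}

def IsTest (φ : Ω → ℝ) : Prop := Measurable φ ∧ ∀ x, φ x ∈ Icc (0 : ℝ) 1

namespace IsTest

lemma nonneg (hφ : IsTest φ) (x : Ω) : 0 ≤ φ x := (hφ.2 x).1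

lemma le_one (hφ : IsTest φ) (x : Ω) : φ x ≤ 1 := (hφ.2 x).2

lemma integrable (hφ : IsTest φ) (μ : Measure Ω) [IsFiniteMeasure μ] : Integrable φ μ :=
  (integrable_const (1 : ℝ)).mono' hφ.1.aestronglyMeasurable
    (.of_forall fun x => by simpa [abs_of_nonneg (hφ.nonneg x)] using hφ.le_one x)

lemma integral_nonneg (hφ : IsTest φ) (μ : Measure Ω) : 0 ≤ ∫ x, φ x ∂μ :=
  MeasureTheory.integral_nonneg hφ.nonneg

lemma integral_le_one (hφ : IsTest φ) (μ : Measure Ω) [IsProbabilityMeasure μ] :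
    ∫ x, φ x ∂μ ≤ 1 := by
  simpa using integral_mono (hφ.integrable μ) (integrable_const 1) hφ.le_one

lemma const {c : ℝ} (hc : c ∈ Icc (0 : ℝ) 1) : IsTest fun _ : Ω => c :=
  ⟨measurable_const, fun _ => hc⟩

lemma indicator_one {s : Set Ω} (hs : MeasurableSet s) : IsTest (s.indicator 1) :=
  ⟨measurable_const.indicator hs, fun x => by by_cases hx : x ∈ s <;> simp [hx]⟩

lemma mul (hφ : IsTest φ) (hψ : IsTest ψ) : IsTest fun x => φ x * ψ x :=
  ⟨hφ.1.mul hψ.1, fun x => ⟨mul_nonneg (hφ.nonneg x) (hψ.nonneg x),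
    mul_le_one₀ (hφ.le_one x) (hψ.nonneg x) (hψ.le_one x)⟩⟩

lemma comp {f : Ω' → Ω} (hφ : IsTest φ) (hf : Measurable f) : IsTest (φ ∘ f) :=
  ⟨hφ.1.comp hf, fun x => hφ.2 (f x)⟩

end IsTest

end Tests

section TradeOff

variable {Ω : Type*} [MeasurableSpace Ω] (P Q : Measure Ω) {α : ℝ} {φ : Ω → ℝ}

lemma tradeOff_eq_sInf : tradeOff P Q α =
    sInf ((fun φ => 1 - ∫ x, φ x ∂Q) '' {φ | IsTest φ ∧ ∫ x, φ x ∂P ≤ α}) := by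
  unfold tradeOff IsTest
  congr 1
  ext β
  constructor
  · rintro ⟨φ, hm, hb, hl, rfl⟩; exact ⟨φ, ⟨⟨hm, hb⟩, hl⟩, rfl⟩
  · rintro ⟨φ, ⟨⟨hm, hb⟩, hl⟩, rfl⟩; exact ⟨φ, hm, hb, hl, rfl⟩

lemma le_tradeOff {t : ℝ} (hα : 0 ≤ α)
    (h : ∀ φ, IsTest φ → ∫ x, φ x ∂P ≤ α → t ≤ 1 - ∫ x, φ x ∂Q) : t ≤ tradeOff P Q α := by
  rw [tradeOff_eq_sInf]
  refine le_csInf ⟨_, ⟨0, ⟨IsTest.const ⟨le_rfl, zero_le_one⟩, by simpa⟩, rfl⟩⟩ ?_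
  rintro _ ⟨φ, ⟨hφ, hφα⟩, rfl⟩
  exact h φ hφ hφα

lemma exists_isTest_tradeOff_lt (hα : 0 ≤ α) {ε : ℝ} (hε : 0 < ε) :
    ∃ φ, IsTest φ ∧ ∫ x, φ x ∂P ≤ α ∧ 1 - ∫ x, φ x ∂Q < tradeOff P Q α + ε := by
  by_contra! h
  linarith [le_tradeOff P Q hα fun φ hφ hφα => h φ hφ hφα]

variable [IsProbabilityMeasure Q]

lemma tradeOff_le (hφ : IsTest φ) (hφα : ∫ x, φ x ∂P ≤ α) :
    tradeOff P Q α ≤ 1 - ∫ x, φ x ∂Q := by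
  rw [tradeOff_eq_sInf]
  refine csInf_le ⟨0, ?_⟩ ⟨φ, ⟨hφ, hφα⟩, rfl⟩
  rintro _ ⟨ψ, ⟨hψ, -⟩, rfl⟩
  linarith [hψ.integral_le_one Q]

lemma integral_le_one_sub_tradeOff (hφ : IsTest φ) :
    ∫ x, φ x ∂Q ≤ 1 - tradeOff P Q (∫ x, φ x ∂P) := by
  linarith [tradeOff_le P Q hφ le_rfl]

lemma tradeOff_nonneg : 0 ≤ tradeOff P Q α := by
  rw [tradeOff_eq_sInf]
  refine Real.sInf_nonneg ?_
  rintro _ ⟨φ, ⟨hφ, -⟩, rfl⟩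
  linarith [hφ.integral_le_one Q]

lemma tradeOff_le_one (hα : 0 ≤ α) : tradeOff P Q α ≤ 1 := by
  simpa using tradeOff_le P Q (IsTest.const (Ω := Ω) ⟨le_rfl, zero_le_one⟩) (by simpa)

lemma tradeOff_anti {α' : ℝ} (hα : 0 ≤ α) (hαα' : α ≤ α') :
    tradeOff P Q α' ≤ tradeOff P Q α :=
  le_tradeOff P Q hα fun _ hφ hφα => tradeOff_le P Q hφ (hφα.trans hαα')

lemma integral_le_one_sub_tradeOff_of_le {Ω' : Type*} [MeasurableSpace Ω'] {P' Q' : Measure Ω'}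
    [IsProbabilityMeasure P] [IsProbabilityMeasure Q']
    (h : ∀ α ∈ Icc (0 : ℝ) 1, tradeOff P' Q' α ≤ tradeOff P Q α) (hφ : IsTest φ) {t : ℝ}
    (ht : ∫ x, φ x ∂P ≤ t) : ∫ x, φ x ∂Q ≤ 1 - tradeOff P' Q' t := by
  have hφP : ∫ x, φ x ∂P ∈ Icc (0 : ℝ) 1 := ⟨hφ.integral_nonneg P, hφ.integral_le_one P⟩
  linarith [integral_le_one_sub_tradeOff P Q hφ, h _ hφP, tradeOff_anti P' Q' hφP.1 ht]

/-- Scaling a test by `α / (α + ε)` brings its size down to `α` at a cost of at most `ε / α`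
in power. -/
lemma tradeOff_le_of_integral_le_add (hα : 0 < α) {ε : ℝ} (hε : 0 ≤ ε) (hφ : IsTest φ)
    (hφα : ∫ x, φ x ∂P ≤ α + ε) : tradeOff P Q α ≤ 1 - ∫ x, φ x ∂Q + ε / α := by
  set c := α / (α + ε)
  have hc : c ∈ Icc (0 : ℝ) 1 := ⟨by positivity, div_le_one_of_le₀ (by linarith) (by positivity)⟩
  have hsize : ∫ x, c * φ x ∂P ≤ α := by
    rw [integral_const_mul]
    calc c * ∫ x, φ x ∂P ≤ c * (α + ε) := mul_le_mul_of_nonneg_left hφα hc.1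
      _ = α := div_mul_cancel₀ _ (by positivity)
  have hscaled := tradeOff_le P Q ((IsTest.const hc).mul hφ) hsize
  rw [integral_const_mul] at hscaled
  have hc' : 1 - c ≤ ε / α := by
    rw [show 1 - c = ε / (α + ε) by simp only [c]; field_simp; ring]
    exact div_le_div_of_nonneg_left hε hα (by linarith)
  nlinarith [mul_nonneg (sub_nonneg.2 hc.2) (sub_nonneg.2 (hφ.integral_le_one Q))]

end TradeOff

section TailMeasure

variable {Ω : Type*} [MeasurableSpace Ω] {μ : Measure Ω} [IsFiniteMeasure μ] {f : Ω → ℝ}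
  {c m : ℝ}

lemma measureReal_lt_le_of_forall_gt (h : ∀ c' > c, μ.real {x | c' < f x} ≤ m) :
    μ.real {x | c < f x} ≤ m := by
  have hm : 0 ≤ m := measureReal_nonneg.trans (h (c + 1) (by linarith))
  have hunion : {x | c < f x} = ⋃ n : ℕ, {x | c + 1 / (n + 1) < f x} := by
    ext x
    simp only [mem_ofPred_eq, mem_iUnion]
    refine ⟨fun hx => ?_, fun ⟨n, hn⟩ => lt_trans (lt_add_of_pos_right c (by positivity)) hn⟩
    obtain ⟨n, hn⟩ := exists_nat_one_div_lt (sub_pos.2 hx)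
    exact ⟨n, by linarith⟩
  have hmono : Monotone fun n : ℕ => {x | c + 1 / (n + 1) < f x} :=
    fun i j hij x (hx : c + 1 / (i + 1 : ℝ) < f x) => show c + 1 / (j + 1 : ℝ) < f x from
      lt_of_le_of_lt (by gcongr) hx
  rw [measureReal_def, hunion, hmono.measure_iUnion]
  refine ENNReal.toReal_le_of_le_ofReal hm (iSup_le fun n => ?_)
  exact (ENNReal.le_ofReal_iff_toReal_le (measure_ne_top _ _) hm).2
    (h _ (lt_add_of_pos_right c (by positivity)))

lemma le_measureReal_le_of_forall_lt (hf : Measurable f)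
    (h : ∀ c' < c, m ≤ μ.real {x | c' < f x}) : m ≤ μ.real {x | c ≤ f x} := by
  have hinter : {x | c ≤ f x} = ⋂ n : ℕ, {x | c - 1 / (n + 1) < f x} := by
    ext x
    simp only [mem_ofPred_eq, mem_iInter]
    refine ⟨fun hx n => lt_of_lt_of_le (sub_lt_self c (by positivity)) hx, fun hx => ?_⟩
    refine le_of_forall_pos_lt_add fun ε hε => ?_
    obtain ⟨n, hn⟩ := exists_nat_one_div_lt hε
    linarith [hx n]
  have hanti : Antitone fun n : ℕ => {x | c - 1 / (n + 1) < f x} :=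
    fun i j hij x (hx : c - 1 / (j + 1 : ℝ) < f x) => show c - 1 / (i + 1 : ℝ) < f x from
      lt_of_le_of_lt (by gcongr) hx
  rw [measureReal_def, hinter, hanti.measure_iInter
    (fun n => (measurableSet_lt measurable_const hf).nullMeasurableSet) ⟨0, measure_ne_top _ _⟩]
  rw [ENNReal.toReal_iInf (fun _ => measure_ne_top _ _)]
  exact le_ciInf fun n => h _ (sub_lt_self c (by positivity))

end TailMeasure

section NeymanPearson

variable {Ω : Type*} [MeasurableSpace Ω] (P Q : Measure Ω)

/-- The density of `Q` with respect to `P + Q`; that of `P` is `1 - qDensity P Q`, so the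
superlevel sets of `qDensity P Q` are those of the likelihood ratio `dQ / dP`. -/
noncomputable def qDensity (x : Ω) : ℝ := (Q.rnDeriv (P + Q) x).toReal

lemma measurable_qDensity : Measurable (qDensity P Q) :=
  (Measure.measurable_rnDeriv _ _).ennreal_toReal

lemma qDensity_nonneg (x : Ω) : 0 ≤ qDensity P Q x := ENNReal.toReal_nonneg

section Finite

variable [IsFiniteMeasure P] [IsFiniteMeasure Q]

lemma qDensity_le_one_ae : ∀ᵐ x ∂(P + Q), qDensity P Q x ≤ 1 := by
  filter_upwards [Measure.rnDeriv_le_one_of_le (Measure.le_add_left le_rfl)] with x hx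
  exact ENNReal.toReal_le_of_le_ofReal zero_le_one (by simpa using hx)

lemma integral_eq_integral_qDensity_mul (f : Ω → ℝ) :
    ∫ x, f x ∂Q = ∫ x, qDensity P Q x * f x ∂(P + Q) :=
  (integral_rnDeriv_smul (Measure.AbsolutelyContinuous.rfl.add_right' P)).symm

lemma integrable_qDensity_mul {f : Ω → ℝ} (hf : Integrable f Q) :
    Integrable (fun x => qDensity P Q x * f x) (P + Q) :=
  (integrable_rnDeriv_smul_iff (Measure.AbsolutelyContinuous.rfl.add_right' P)).2 hf

lemma integral_eq_integral_one_sub_qDensity_mul {f : Ω → ℝ} (hf : Integrable f (P + Q)) :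
    ∫ x, f x ∂P = ∫ x, (1 - qDensity P Q x) * f x ∂(P + Q) := by
  have hfQ : Integrable f Q := hf.mono_measure (Measure.le_add_left le_rfl)
  simp only [sub_mul, one_mul]
  rw [integral_sub hf (integrable_qDensity_mul P Q hfQ), ← integral_eq_integral_qDensity_mul,
    integral_add_measure (hf.mono_measure (Measure.le_add_right le_rfl)) hfQ]
  ring

lemma measureReal_one_le_qDensity : P.real {x | 1 ≤ qDensity P Q x} = 0 := by
  set A := {x | 1 ≤ qDensity P Q x}
  have hA : MeasurableSet A := measurableSet_le measurable_const (measurable_qDensity P Q)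
  have h := integral_eq_integral_one_sub_qDensity_mul P Q
    ((IsTest.indicator_one hA).integrable (P + Q))
  rw [integral_indicator_one hA] at h
  refine le_antisymm (h ▸ integral_nonpos fun x => ?_) measureReal_nonneg
  by_cases hx : x ∈ A
  · simp only [indicator_of_mem hx, Pi.one_apply, mul_one]
    exact sub_nonpos.2 hx
  · simp [hx]

/-- Integrating `(qDensity P Q - c) * (ψ - φ) ≥ 0` against `P + Q` gives
`(1 - c) (∫ ψ dQ - ∫ φ dQ) ≥ c (∫ ψ dP - ∫ φ dP)`. -/
lemma integral_le_integral_of_forall_nonneg_mul_sub {φ ψ : Ω → ℝ} {c : ℝ} (hc0 : 0 ≤ c)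
    (hc1 : c < 1) (hφ : IsTest φ) (hψ : IsTest ψ) (hP : ∫ x, φ x ∂P ≤ ∫ x, ψ x ∂P)
    (h : ∀ x, 0 ≤ (qDensity P Q x - c) * (ψ x - φ x)) : ∫ x, φ x ∂Q ≤ ∫ x, ψ x ∂Q := by
  have hD : ∀ (μ : Measure Ω) [IsFiniteMeasure μ], Integrable (fun x => ψ x - φ x) μ :=
    fun μ _ => (hψ.integrable μ).sub (hφ.integrable μ)
  have hsplit : ∫ x, (qDensity P Q x - c) * (ψ x - φ x) ∂(P + Q)
      = ∫ x, ψ x - φ x ∂Q - c * (∫ x, ψ x - φ x ∂P + ∫ x, ψ x - φ x ∂Q) := by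
    simp only [sub_mul _ c]
    rw [integral_sub (integrable_qDensity_mul P Q (hD Q)) ((hD (P + Q)).const_mul c),
      ← integral_eq_integral_qDensity_mul, integral_const_mul,
      integral_add_measure (hD P) (hD Q)]
  have hDP : 0 ≤ ∫ x, ψ x - φ x ∂P := by
    rw [integral_sub (hψ.integrable P) (hφ.integrable P)]; linarith
  have hDQ : 0 ≤ ∫ x, ψ x - φ x ∂Q := by
    have := hsplit ▸ integral_nonneg h
    nlinarith [mul_nonneg hc0 hDP]
  rw [integral_sub (hψ.integrable Q) (hφ.integrable Q)] at hDQ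
  linarith

/-- A test of `P`-size zero can only detect `Q` where `P` has no density. -/
lemma integral_le_measureReal_one_le_qDensity {φ : Ω → ℝ} (hφ : IsTest φ)
    (hφP : ∫ x, φ x ∂P ≤ 0) : ∫ x, φ x ∂Q ≤ Q.real {x | 1 ≤ qDensity P Q x} := by
  have hA : MeasurableSet {x | 1 ≤ qDensity P Q x} :=
    measurableSet_le measurable_const (measurable_qDensity P Q)
  have hint : Integrable (fun x => (1 - qDensity P Q x) * φ x) (P + Q) := by
    simp only [sub_mul, one_mul]
    exact (hφ.integrable _).sub (integrable_qDensity_mul P Q (hφ.integrable Q))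
  have hnonneg : 0 ≤ᵐ[P + Q] fun x => (1 - qDensity P Q x) * φ x := by
    filter_upwards [qDensity_le_one_ae P Q] with x hx
    exact mul_nonneg (sub_nonneg.2 hx) (hφ.nonneg x)
  have hzero : (fun x => (1 - qDensity P Q x) * φ x) =ᵐ[P + Q] 0 := by
    refine (integral_eq_zero_iff_of_nonneg_ae hnonneg hint).1 (le_antisymm ?_ ?_)
    · rw [← integral_eq_integral_one_sub_qDensity_mul P Q (hφ.integrable _)]; exact hφP
    · exact integral_nonneg_of_ae hnonneg
  rw [← integral_indicator_one hA, integral_eq_integral_qDensity_mul P Q φ,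
    integral_eq_integral_qDensity_mul P Q]
  refine integral_mono_ae (integrable_qDensity_mul P Q (hφ.integrable Q))
    (integrable_qDensity_mul P Q ((IsTest.indicator_one hA).integrable Q)) ?_
  filter_upwards [hzero] with x hx
  by_cases h1 : x ∈ {x | 1 ≤ qDensity P Q x}
  · rw [indicator_of_mem h1, Pi.one_apply, mul_one]
    exact mul_le_of_le_one_right (qDensity_nonneg P Q x) (hφ.le_one x)
  · have hφx : φ x = 0 :=
      (mul_eq_zero.1 hx).resolve_left (sub_ne_zero.2 (ne_of_gt (not_le.1 h1)))
    simp [hφx, indicator_of_notMem h1]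

lemma measureReal_one_lt_qDensity : P.real {x | 1 < qDensity P Q x} = 0 :=
  le_antisymm ((measureReal_mono (ofPred_subset_ofPred.2 fun _ hx => hx.le)).trans_eq
    (measureReal_one_le_qDensity P Q)) measureReal_nonneg

end Finite

noncomputable def npThreshold (m : ℝ) : ℝ :=
  sInf {c ∈ Icc (0 : ℝ) 1 | P.real {x | c < qDensity P Q x} ≤ m}

/-- The value `1` on a `P`-null threshold set matters when the threshold is `1`: then
`{qDensity P Q = 1}` carries the part of `Q` singular to `P`. -/
noncomputable def npRandomization (m : ℝ) : ℝ :=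
  if P.real {x | qDensity P Q x = npThreshold P Q m} = 0 then 1
  else (m - P.real {x | npThreshold P Q m < qDensity P Q x}) /
    P.real {x | qDensity P Q x = npThreshold P Q m}

noncomputable def npTest (m : ℝ) (x : Ω) : ℝ :=
  {x | npThreshold P Q m < qDensity P Q x}.indicator 1 x
    + npRandomization P Q m * {x | qDensity P Q x = npThreshold P Q m}.indicator 1 x

variable {m m' : ℝ} {x : Ω}

lemma npTest_of_lt (h : qDensity P Q x < npThreshold P Q m) : npTest P Q m x = 0 := by
  simp [npTest, h.ne, h.not_gt]

lemma npTest_of_eq (h : qDensity P Q x = npThreshold P Q m) :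
    npTest P Q m x = npRandomization P Q m := by
  simp [npTest, h]

lemma npTest_of_gt (h : npThreshold P Q m < qDensity P Q x) : npTest P Q m x = 1 := by
  simp [npTest, h, h.ne']

lemma integral_npTest (μ : Measure Ω) [IsFiniteMeasure μ] :
    ∫ x, npTest P Q m x ∂μ = μ.real {x | npThreshold P Q m < qDensity P Q x}
      + npRandomization P Q m * μ.real {x | qDensity P Q x = npThreshold P Q m} := by
  have hA : MeasurableSet {x | npThreshold P Q m < qDensity P Q x} :=
    measurableSet_lt measurable_const (measurable_qDensity P Q)
  have hB : MeasurableSet {x | qDensity P Q x = npThreshold P Q m} :=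
    measurableSet_eq_fun (measurable_qDensity P Q) measurable_const
  unfold npTest
  rw [integral_add ((IsTest.indicator_one hA).integrable μ)
      (((IsTest.indicator_one hB).integrable μ).const_mul _),
    integral_const_mul, integral_indicator_one hA, integral_indicator_one hB]

lemma measureReal_npThreshold_le_eq_add [IsFiniteMeasure P] :
    P.real {x | npThreshold P Q m ≤ qDensity P Q x} =
      P.real {x | npThreshold P Q m < qDensity P Q x}
        + P.real {x | qDensity P Q x = npThreshold P Q m} := by
  have hunion : {x | npThreshold P Q m ≤ qDensity P Q x} =
      {x | npThreshold P Q m < qDensity P Q x} ∪ {x | qDensity P Q x = npThreshold P Q m} := by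
    ext x
    simp [le_iff_lt_or_eq, eq_comm]
  rw [hunion]
  exact measureReal_union (disjoint_left.2 fun _ h₁ h₂ => ne_of_gt h₁ h₂)
    (measurableSet_eq_fun (measurable_qDensity P Q) measurable_const)

variable [IsProbabilityMeasure P] [IsFiniteMeasure Q]

lemma one_mem_npThresholdSet (hm : 0 ≤ m) :
    (1 : ℝ) ∈ {c ∈ Icc (0 : ℝ) 1 | P.real {x | c < qDensity P Q x} ≤ m} :=
  ⟨⟨zero_le_one, le_rfl⟩, (measureReal_one_lt_qDensity P Q).trans_le hm⟩

lemma npThreshold_mem_Icc (hm : 0 ≤ m) : npThreshold P Q m ∈ Icc 0 1 :=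
  ⟨le_csInf ⟨1, one_mem_npThresholdSet P Q hm⟩ fun _ hc => hc.1.1,
    csInf_le ⟨0, fun _ hc => hc.1.1⟩ (one_mem_npThresholdSet P Q hm)⟩

lemma npThreshold_anti (hm : 0 ≤ m) (hmm' : m ≤ m') : npThreshold P Q m' ≤ npThreshold P Q m :=
  csInf_le_csInf ⟨0, fun _ hc => hc.1.1⟩ ⟨1, one_mem_npThresholdSet P Q hm⟩
    fun _ hc => ⟨hc.1, hc.2.trans hmm'⟩

lemma measureReal_npThreshold_lt_le (hm : 0 ≤ m) :
    P.real {x | npThreshold P Q m < qDensity P Q x} ≤ m :=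
  measureReal_lt_le_of_forall_gt fun c' hc' => by
    obtain ⟨c, hc, hcc'⟩ := exists_lt_of_csInf_lt ⟨1, one_mem_npThresholdSet P Q hm⟩ hc'
    exact (measureReal_mono fun x (hx : c' < _) => hcc'.trans hx).trans hc.2

lemma le_measureReal_npThreshold_le (hm : m ∈ Icc 0 1) :
    m ≤ P.real {x | npThreshold P Q m ≤ qDensity P Q x} :=
  le_measureReal_le_of_forall_lt (measurable_qDensity P Q) fun c hc => by
    by_contra! hlt
    rcases lt_or_ge c 0 with hc0 | hc0
    · have huniv : {x | c < qDensity P Q x} = univ :=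
        eq_univ_of_forall fun x => hc0.trans_le (qDensity_nonneg P Q x)
      rw [huniv, probReal_univ] at hlt
      linarith [hm.2]
    · exact hc.not_ge (csInf_le ⟨0, fun _ hc => hc.1.1⟩
        ⟨⟨hc0, hc.le.trans (npThreshold_mem_Icc P Q hm.1).2⟩, hlt.le⟩)

lemma npRandomization_mem_Icc (hm : m ∈ Icc 0 1) : npRandomization P Q m ∈ Icc 0 1 := by
  have hA := measureReal_npThreshold_lt_le P Q hm.1
  have hAB := (le_measureReal_npThreshold_le P Q hm).trans_eq
    (measureReal_npThreshold_le_eq_add P Q)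
  unfold npRandomization
  split_ifs with hB
  · exact ⟨zero_le_one, le_rfl⟩
  · have hBpos := lt_of_le_of_ne measureReal_nonneg (Ne.symm hB)
    exact ⟨div_nonneg (by linarith) hBpos.le, (div_le_one hBpos).2 (by linarith)⟩

lemma isTest_npTest (hm : m ∈ Icc 0 1) : IsTest (npTest P Q m) := by
  refine ⟨(measurable_const.indicator (measurableSet_lt measurable_const
    (measurable_qDensity P Q))).add (measurable_const.mul (measurable_const.indicator
      (measurableSet_eq_fun (measurable_qDensity P Q) measurable_const))), fun x => ?_⟩
  rcases lt_trichotomy (qDensity P Q x) (npThreshold P Q m) with h | h | h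
  · simp [npTest_of_lt P Q h]
  · simpa [npTest_of_eq P Q h] using npRandomization_mem_Icc P Q hm
  · simp [npTest_of_gt P Q h]

lemma integral_npTest_left (hm : m ∈ Icc 0 1) : ∫ x, npTest P Q m x ∂P = m := by
  have hA := measureReal_npThreshold_lt_le P Q hm.1
  have hAB := (le_measureReal_npThreshold_le P Q hm).trans_eq
    (measureReal_npThreshold_le_eq_add P Q)
  rw [integral_npTest]
  unfold npRandomization
  split_ifs with hB
  · rw [hB] at hAB ⊢
    linarith
  · field_simp
    ring

lemma npTest_mono (hm : m ∈ Icc 0 1) (hm' : m' ∈ Icc 0 1) (hmm' : m ≤ m') (x : Ω) :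
    npTest P Q m x ≤ npTest P Q m' x := by
  have hthr := npThreshold_anti P Q hm.1 hmm'
  rcases lt_trichotomy (qDensity P Q x) (npThreshold P Q m) with h | h | h
  · rw [npTest_of_lt P Q h]
    exact (isTest_npTest P Q hm').nonneg x
  · rw [npTest_of_eq P Q h]
    rcases hthr.lt_or_eq with hlt | heq
    · rw [npTest_of_gt P Q (h ▸ hlt)]
      exact (npRandomization_mem_Icc P Q hm).2
    · rw [npTest_of_eq P Q (h.trans heq.symm)]
      unfold npRandomization
      rw [heq]
      split_ifs
      · exact le_rfl
      · gcongr
  · rw [npTest_of_gt P Q h, npTest_of_gt P Q (hthr.trans_lt h)]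

lemma integral_le_integral_npTest (hm : m ∈ Icc 0 1) {φ : Ω → ℝ} (hφ : IsTest φ)
    (hφm : ∫ x, φ x ∂P ≤ m) : ∫ x, φ x ∂Q ≤ ∫ x, npTest P Q m x ∂Q := by
  obtain ⟨hthr0, hthr1⟩ := npThreshold_mem_Icc P Q hm.1
  rcases hthr1.lt_or_eq with hlt | heq
  · refine integral_le_integral_of_forall_nonneg_mul_sub P Q hthr0 hlt hφ (isTest_npTest P Q hm)
      ((integral_npTest_left P Q hm).symm ▸ hφm) fun x => ?_
    rcases lt_trichotomy (qDensity P Q x) (npThreshold P Q m) with h | h | h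
    · rw [npTest_of_lt P Q h]
      exact mul_nonneg_of_nonpos_of_nonpos (by linarith) (by linarith [hφ.nonneg x])
    · rw [h, sub_self, zero_mul]
    · rw [npTest_of_gt P Q h]
      exact mul_nonneg (by linarith) (by linarith [hφ.le_one x])
  · have hP1 := measureReal_one_le_qDensity P Q
    have hm0 : m = 0 := by
      have := le_measureReal_npThreshold_le P Q hm
      rw [heq, hP1] at this
      exact le_antisymm this hm.1
    have hγ : npRandomization P Q m = 1 := by
      refine if_pos (le_antisymm ?_ measureReal_nonneg)
      rw [heq, ← hP1]
      exact measureReal_mono fun x (hx : _ = _) => hx.ge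
    have hnp : npTest P Q m = {x | 1 ≤ qDensity P Q x}.indicator 1 := by
      funext x
      rcases lt_trichotomy (qDensity P Q x) 1 with h | h | h
      · simp [npTest_of_lt P Q (heq ▸ h), indicator, h.not_ge]
      · simp [npTest_of_eq P Q (heq ▸ h), hγ, indicator, h.ge]
      · simp [npTest_of_gt P Q (heq ▸ h), indicator, h.le]
    rw [hnp, integral_indicator_one (measurableSet_le measurable_const (measurable_qDensity P Q))]
    exact integral_le_measureReal_one_le_qDensity P Q hφ (hm0 ▸ hφm)

lemma one_sub_integral_npTest_le_tradeOff (hm : m ∈ Icc 0 1) :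
    1 - ∫ x, npTest P Q m x ∂Q ≤ tradeOff P Q m :=
  le_tradeOff P Q hm.1 fun _ hφ hφm => by linarith [integral_le_integral_npTest P Q hm hφ hφm]

lemma exists_antitone_optimal_tests (n : ℕ) {M : ℕ → ℝ} (hM : ∀ i, M i ∈ Icc 0 1)
    (hM_anti : Antitone M) :
    ∃ W : ℕ → Ω → ℝ, (∀ i, IsTest (W i)) ∧ (∀ i x, W (i + 1) x ≤ W i x) ∧
      W 0 = 1 ∧ W (n + 1) = 0 ∧
      ∀ i < n, ∫ x, W (i + 1) x ∂P ≤ M i ∧ 1 - ∫ x, W (i + 1) x ∂Q ≤ tradeOff P Q (M i) := by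
  refine ⟨fun | 0 => 1 | i + 1 => if i < n then npTest P Q (M i) else 0, ?_, ?_, rfl,
    by simp, fun i hi => ?_⟩
  · rintro (_ | i)
    · exact IsTest.const ⟨zero_le_one, le_rfl⟩
    · dsimp only
      split_ifs
      · exact isTest_npTest P Q (hM i)
      · exact IsTest.const ⟨le_rfl, zero_le_one⟩
  · rintro (_ | i) x
    · dsimp only
      split_ifs
      · exact (isTest_npTest P Q (hM 0)).le_one x
      · exact zero_le_one
    · dsimp only
      split_ifs
      · exact npTest_mono P Q (hM (i + 1)) (hM i) (hM_anti (Nat.le_succ i)) x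
      · omega
      · exact (isTest_npTest P Q (hM i)).nonneg x
      · exact le_rfl
  · simp only [if_pos hi]
    exact ⟨(integral_npTest_left P Q (hM i)).le, one_sub_integral_npTest_le_tradeOff P Q (hM i)⟩

end NeymanPearson

lemma Finset.sum_range_succ_sub_mul (q t : ℕ → ℝ) (n : ℕ) :
    ∑ i ∈ Finset.range (n + 1), (q i - q (i + 1)) * t i
      = q 0 * t 0 - q (n + 1) * t n + ∑ i ∈ Finset.range n, q (i + 1) * (t (i + 1) - t i) := by
  induction n with
  | zero => simp [sub_mul]
  | succ n ih =>
    rw [Finset.sum_range_succ, ih, Finset.sum_range_succ]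
    ring

lemma Finset.sum_range_ite_lt {M : Type*} [AddCommMonoid M] {k n : ℕ} (hkn : k ≤ n)
    (h : ℕ → M) : ∑ i ∈ Finset.range n, (if i < k then h i else 0) = ∑ i ∈ Finset.range k, h i := by
  rw [← Finset.sum_filter]
  congr 1
  ext i
  simp only [Finset.mem_filter, Finset.mem_range]
  omega

section Layers

variable {Ω₁ Ω₂ : Type*} [MeasurableSpace Ω₁] [MeasurableSpace Ω₂]

noncomputable def layeredTest (W : ℕ → Ω₁ → ℝ) (χ : ℕ → Ω₂ → ℝ) (n : ℕ) (p : Ω₁ × Ω₂) : ℝ :=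
  ∑ i ∈ Finset.range (n + 1), (W i p.1 - W (i + 1) p.1) * χ i p.2

variable {W : ℕ → Ω₁ → ℝ} {χ : ℕ → Ω₂ → ℝ} {n : ℕ}

lemma isTest_layeredTest (hW : ∀ i, IsTest (W i)) (hW_anti : ∀ i x, W (i + 1) x ≤ W i x)
    (hχ : ∀ i, IsTest (χ i)) : IsTest (layeredTest W χ n) := by
  refine ⟨Finset.measurable_sum _ fun i _ => (((hW i).1.comp measurable_fst).sub
    ((hW (i + 1)).1.comp measurable_fst)).mul ((hχ i).1.comp measurable_snd), fun p => ⟨?_, ?_⟩⟩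
  · exact Finset.sum_nonneg fun i _ =>
      mul_nonneg (sub_nonneg.2 (hW_anti i p.1)) ((hχ i).nonneg p.2)
  · calc layeredTest W χ n p ≤ ∑ i ∈ Finset.range (n + 1), (W i p.1 - W (i + 1) p.1) :=
          Finset.sum_le_sum fun i _ =>
            mul_le_of_le_one_right (sub_nonneg.2 (hW_anti i p.1)) ((hχ i).le_one p.2)
      _ = W 0 p.1 - W (n + 1) p.1 := Finset.sum_range_sub' (fun i => W i p.1) (n + 1)
      _ ≤ 1 := by linarith [(hW 0).le_one p.1, (hW (n + 1)).nonneg p.1]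

variable (μ₁ : Measure Ω₁) (μ₂ : Measure Ω₂) [IsFiniteMeasure μ₂]

lemma integral_layeredTest [IsFiniteMeasure μ₁] (hW : ∀ i, IsTest (W i)) (hχ : ∀ i, IsTest (χ i)) :
    ∫ p, layeredTest W χ n p ∂(μ₁.prod μ₂) = ∑ i ∈ Finset.range (n + 1),
      (∫ x, W i x ∂μ₁ - ∫ x, W (i + 1) x ∂μ₁) * ∫ w, χ i w ∂μ₂ := by
  have hWW : ∀ i, Integrable (fun x => W i x - W (i + 1) x) μ₁ :=
    fun i => ((hW i).integrable μ₁).sub ((hW (i + 1)).integrable μ₁)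
  unfold layeredTest
  rw [integral_finsetSum _ fun i _ => (hWW i).mul_prod ((hχ i).integrable μ₂)]
  refine Finset.sum_congr rfl fun i _ => ?_
  rw [← integral_sub ((hW i).integrable μ₁) ((hW (i + 1)).integrable μ₁)]
  exact integral_prod_mul (fun x => W i x - W (i + 1) x) (χ i)

lemma integral_layeredTest_le [IsFiniteMeasure μ₁] (hW : ∀ i, IsTest (W i))
    (hW_anti : ∀ i x, W (i + 1) x ≤ W i x) (hχ : ∀ i, IsTest (χ i))
    (hχ_size : ∀ i, ∫ w, χ i w ∂μ₂ ≤ i / n) {M : ℕ → ℝ}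
    (hW_size : ∀ i < n, ∫ x, W (i + 1) x ∂μ₁ ≤ M i) :
    ∫ p, layeredTest W χ n p ∂(μ₁.prod μ₂) ≤ ∑ i ∈ Finset.range n, M i / n := by
  have hstep : ∀ i, 0 ≤ ∫ x, W i x ∂μ₁ - ∫ x, W (i + 1) x ∂μ₁ := fun i =>
    sub_nonneg.2 (integral_mono ((hW _).integrable μ₁) ((hW _).integrable μ₁) (hW_anti i))
  rw [integral_layeredTest μ₁ μ₂ hW hχ]
  refine (Finset.sum_le_sum fun i _ => mul_le_mul_of_nonneg_left (hχ_size i) (hstep i)).trans ?_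
  rw [Finset.sum_range_succ_sub_mul]
  have hlast : 0 ≤ (∫ x, W (n + 1) x ∂μ₁) * ((n : ℝ) / n) :=
    mul_nonneg ((hW _).integral_nonneg μ₁) (by positivity)
  have hsum : ∑ i ∈ Finset.range n, (∫ x, W (i + 1) x ∂μ₁) * (((i + 1 : ℕ) : ℝ) / n - i / n)
      ≤ ∑ i ∈ Finset.range n, M i / n := Finset.sum_le_sum fun i hi => by
    rw [Nat.cast_succ, add_div, add_sub_cancel_left, mul_one_div]
    exact div_le_div_of_nonneg_right (hW_size i (Finset.mem_range.1 hi)) n.cast_nonneg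
  simp only [Nat.cast_zero, zero_div, mul_zero, zero_sub]
  linarith

lemma le_integral_layeredTest [IsProbabilityMeasure μ₁] (hW : ∀ i, IsTest (W i))
    (hW_anti : ∀ i x, W (i + 1) x ≤ W i x) (hW₀ : W 0 = 1) (hW_last : W (n + 1) = 0)
    (hχ : ∀ i, IsTest (χ i)) {g : ℕ → ℝ} (hg : Monotone g) {δ : ℝ}
    (hχ_power : ∀ i, g i - δ ≤ ∫ w, χ i w ∂μ₂) {M' : ℕ → ℝ}
    (hW_power : ∀ i < n, M' i ≤ ∫ x, W (i + 1) x ∂μ₁) :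
    g 0 + ∑ i ∈ Finset.range n, M' i * (g (i + 1) - g i) - δ
      ≤ ∫ p, layeredTest W χ n p ∂(μ₁.prod μ₂) := by
  have hstep : ∀ i, 0 ≤ ∫ x, W i x ∂μ₁ - ∫ x, W (i + 1) x ∂μ₁ := fun i =>
    sub_nonneg.2 (integral_mono ((hW _).integrable μ₁) ((hW _).integrable μ₁) (hW_anti i))
  rw [integral_layeredTest μ₁ μ₂ hW hχ]
  refine le_trans ?_ (Finset.sum_le_sum fun i _ => mul_le_mul_of_nonneg_left (hχ_power i) (hstep i))
  rw [Finset.sum_range_succ_sub_mul, hW₀, hW_last]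
  simp only [Pi.one_apply, integral_const, probReal_univ, smul_eq_mul, one_mul, Pi.zero_apply,
    mul_one, zero_mul, sub_zero, sub_sub_sub_cancel_right]
  have := Finset.sum_le_sum fun i hi => mul_le_mul_of_nonneg_right
    (hW_power i (Finset.mem_range.1 hi)) (sub_nonneg.2 (hg (Nat.le_succ i)))
  linarith

end Layers

lemma integral_comp_eq_add_sum_measureReal {Y : Type*} [MeasurableSpace Y] (μ : Measure Y)
    [IsProbabilityMeasure μ] {k : Y → ℕ} (hk : Measurable k) {n : ℕ} (hkn : ∀ y, k y ≤ n)
    (g : ℕ → ℝ) :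
    ∫ y, g (k y) ∂μ = g 0 + ∑ i ∈ Finset.range n, μ.real {y | i < k y} * (g (i + 1) - g i) := by
  have hs : ∀ i, MeasurableSet {y | i < k y} := fun i => hk measurableSet_Ioi
  have hint : ∀ i ∈ Finset.range n,
      Integrable ({y | i < k y}.indicator fun _ => g (i + 1) - g i) μ :=
    fun i _ => (integrable_const _).indicator (hs i)
  have hlayers : ∀ y, g (k y) = g 0 + ∑ i ∈ Finset.range n,
      {y | i < k y}.indicator (fun _ => g (i + 1) - g i) y := fun y => by
    have := Finset.sum_range_ite_lt (hkn y) fun i => g (i + 1) - g i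
    rw [Finset.sum_range_sub] at this
    simp only [indicator_apply, mem_ofPred_eq, this]
    ring
  rw [integral_congr_ae (ae_of_all _ hlayers), integral_add (integrable_const _)
    (integrable_finsetSum _ hint), integral_const, probReal_univ, one_smul,
    integral_finsetSum _ hint]
  simp_rw [integral_indicator_const _ (hs _), smul_eq_mul]

lemma IsTest.integral_kernel {Y Z : Type*} [MeasurableSpace Y] [MeasurableSpace Z]
    {φ : Y × Z → ℝ} (hφ : IsTest φ) (κ : Kernel Y Z) [IsMarkovKernel κ] :
    IsTest fun y => ∫ z, φ (y, z) ∂κ y :=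
  ⟨hφ.1.stronglyMeasurable.integral_kernel_prod_right'.measurable, fun _ =>
    ⟨(hφ.comp measurable_prodMk_left).integral_nonneg _,
      (hφ.comp measurable_prodMk_left).integral_le_one _⟩⟩

section Composition

variable {Y Z Ω₁ Ω₂ : Type*} [MeasurableSpace Y] [MeasurableSpace Z]
  [MeasurableSpace Ω₁] [MeasurableSpace Ω₂]
  {μ₁ μ₁' : Measure Y} [IsProbabilityMeasure μ₁] [IsProbabilityMeasure μ₁']
  {κ κ' : Kernel Y Z} [IsMarkovKernel κ] [IsMarkovKernel κ']
  {P Q : Measure Ω₁} [IsProbabilityMeasure P] [IsProbabilityMeasure Q]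
  {P' Q' : Measure Ω₂} [IsProbabilityMeasure P'] [IsProbabilityMeasure Q']

theorem exists_isTest_prod_simulating_compProd
    (h1 : ∀ α ∈ Set.Icc (0:ℝ) 1, tradeOff P Q α ≤ tradeOff μ₁ μ₁' α)
    (h2 : ∀ y : Y, ∀ α ∈ Set.Icc (0:ℝ) 1, tradeOff P' Q' α ≤ tradeOff (κ y) (κ' y) α)
    {φ : Y × Z → ℝ} (hφ : IsTest φ) {n : ℕ} (hn : 0 < n) {δ : ℝ} (hδ : 0 < δ) :
    ∃ ψ : Ω₁ × Ω₂ → ℝ, IsTest ψ ∧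
      ∫ p, ψ p ∂(P.prod P') ≤ ∫ y, (⌈n * ∫ z, φ (y, z) ∂κ y⌉₊ : ℝ) / n ∂μ₁ ∧
      ∫ p, φ p ∂(μ₁' ⊗ₘ κ') - δ ≤ ∫ p, ψ p ∂(Q.prod Q') := by
  set a := fun y => ∫ z, φ (y, z) ∂κ y
  have ha : IsTest a := hφ.integral_kernel κ
  set k : Y → ℕ := fun y => ⌈n * a y⌉₊
  have hk : Measurable k := (measurable_const.mul ha.1).nat_ceil
  have hkn : ∀ y, k y ≤ n := fun y =>
    Nat.ceil_le.2 (mul_le_of_le_one_right n.cast_nonneg (ha.le_one y))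
  set g : ℕ → ℝ := fun i => 1 - tradeOff P' Q' (i / n)
  have hg : Monotone g := fun i j hij => sub_le_sub_left (tradeOff_anti P' Q' (by positivity)
    (div_le_div_of_nonneg_right (Nat.cast_le.2 hij) n.cast_nonneg)) 1
  have hM : ∀ i, μ₁.real {y | i < k y} ∈ Icc (0 : ℝ) 1 :=
    fun i => ⟨measureReal_nonneg, measureReal_le_one⟩
  obtain ⟨W, hW, hW_anti, hW₀, hW_last, hW_opt⟩ := exists_antitone_optimal_tests P Q n hM
    fun i j hij => measureReal_mono fun y (hy : j < k y) => lt_of_le_of_lt hij hy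
  choose χ hχ hχ_size hχ_power using fun i : ℕ =>
    exists_isTest_tradeOff_lt P' Q' (α := i / n) (by positivity) hδ
  refine ⟨layeredTest W χ n, isTest_layeredTest hW hW_anti hχ, ?_, ?_⟩
  · have hlayers := integral_comp_eq_add_sum_measureReal μ₁ hk hkn fun i => (i : ℝ) / n
    simp only [Nat.cast_zero, zero_div, zero_add, Nat.cast_succ, add_div, add_sub_cancel_left,
      mul_one_div] at hlayers
    exact hlayers ▸ integral_layeredTest_le P P' hW hW_anti hχ hχ_size fun i hi => (hW_opt i hi).1
  · have hW_power : ∀ i < n, μ₁'.real {y | i < k y} ≤ ∫ x, W (i + 1) x ∂Q := fun i hi => by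
      have hC : MeasurableSet {y | i < k y} := hk measurableSet_Ioi
      have := integral_le_one_sub_tradeOff_of_le μ₁ μ₁' h1 (IsTest.indicator_one hC) le_rfl
      rw [integral_indicator_one hC, integral_indicator_one hC] at this
      linarith [(hW_opt i hi).2]
    have hg_test : IsTest g := ⟨measurable_from_nat, fun i =>
      ⟨by linarith [tradeOff_le_one P' Q' (α := i / n) (by positivity)],
        by linarith [tradeOff_nonneg P' Q' (α := i / n)]⟩⟩
    have hb : ∀ y, ∫ z, φ (y, z) ∂κ' y ≤ g (k y) := fun y =>
      integral_le_one_sub_tradeOff_of_le (κ y) (κ' y) (h2 y) (hφ.comp measurable_prodMk_left)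
        ((le_div_iff₀ (by positivity)).2 (by rw [mul_comm]; exact Nat.le_ceil _))
    have hpower := le_integral_layeredTest Q Q' hW hW_anti hW₀ hW_last hχ hg
      (fun i => by linarith [hχ_power i]) hW_power
    rw [← integral_comp_eq_add_sum_measureReal μ₁' hk hkn] at hpower
    rw [Measure.integral_compProd (hφ.integrable _)]
    linarith [integral_mono (g := fun y => g (k y)) ((hφ.integral_kernel κ').integrable μ₁')
      ((hg_test.comp hk).integrable μ₁') hb]

end Composition

section Ceiling

variable {Y : Type*} [MeasurableSpace Y] (μ : Measure Y) [IsProbabilityMeasure μ] {a : Y → ℝ}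

lemma integral_natCeil_mul_div_le (ha : IsTest a) (n : ℕ) :
    ∫ y, (⌈n * a y⌉₊ : ℝ) / n ∂μ ≤ ∫ y, a y ∂μ + 1 / n := by
  have hbound : ∀ y, (⌈n * a y⌉₊ : ℝ) / n ≤ a y + 1 / n := fun y => by
    rcases n.eq_zero_or_pos with rfl | hn
    · simpa using ha.nonneg y
    · rw [div_le_iff₀ (by positivity), add_mul, one_div_mul_cancel (by positivity), mul_comm (a y)]
      exact (Nat.ceil_lt_add_one (mul_nonneg n.cast_nonneg (ha.nonneg y))).le
  calc ∫ y, (⌈n * a y⌉₊ : ℝ) / n ∂μ ≤ ∫ y, (a y + 1 / n) ∂μ :=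
        integral_mono_of_nonneg (ae_of_all _ fun _ => by positivity)
          ((ha.integrable μ).add (integrable_const _)) (ae_of_all _ hbound)
    _ = ∫ y, a y ∂μ + 1 / n := by
        rw [integral_add (ha.integrable μ) (integrable_const _), integral_const]
        simp

lemma integral_natCeil_mul_div_eq_zero (ha : IsTest a) (h : ∫ y, a y ∂μ ≤ 0) (n : ℕ) :
    ∫ y, (⌈n * a y⌉₊ : ℝ) / n ∂μ = 0 := by
  have hae : a =ᵐ[μ] 0 := (integral_eq_zero_iff_of_nonneg ha.nonneg (ha.integrable μ)).1
    (le_antisymm h (ha.integral_nonneg μ))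
  refine integral_eq_zero_of_ae ?_
  filter_upwards [hae] with y hy
  simp [hy]

end Ceiling

theorem stmt_2 {Y Z Ω₁ Ω₂ : Type*} [MeasurableSpace Y] [MeasurableSpace Z]
    [MeasurableSpace Ω₁] [MeasurableSpace Ω₂]
    (μ₁ μ₁' : Measure Y) [IsProbabilityMeasure μ₁] [IsProbabilityMeasure μ₁']
    (κ κ' : Kernel Y Z) [IsMarkovKernel κ] [IsMarkovKernel κ']
    (P Q : Measure Ω₁) [IsProbabilityMeasure P] [IsProbabilityMeasure Q]
    (P' Q' : Measure Ω₂) [IsProbabilityMeasure P'] [IsProbabilityMeasure Q']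
    (h1 : ∀ α ∈ Set.Icc (0:ℝ) 1, tradeOff P Q α ≤ tradeOff μ₁ μ₁' α)
    (h2 : ∀ y : Y, ∀ α ∈ Set.Icc (0:ℝ) 1, tradeOff P' Q' α ≤ tradeOff (κ y) (κ' y) α) :
    ∀ α ∈ Set.Icc (0:ℝ) 1,
      tradeOff (P.prod P') (Q.prod Q') α ≤ tradeOff (μ₁ ⊗ₘ κ) (μ₁' ⊗ₘ κ') α := by
  intro α hα
  refine le_tradeOff _ _ hα.1 fun φ hφ hφα => le_of_forall_pos_le_add fun δ hδ => ?_
  have ha := hφ.integral_kernel κ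
  rw [Measure.integral_compProd (hφ.integrable _)] at hφα
  rcases hα.1.eq_or_lt with rfl | hα0
  · obtain ⟨ψ, hψ, hsize, hpower⟩ :=
      exists_isTest_prod_simulating_compProd h1 h2 hφ (n := 1) one_pos hδ
    rw [integral_natCeil_mul_div_eq_zero μ₁ ha hφα] at hsize
    linarith [tradeOff_le (P.prod P') (Q.prod Q') hψ hsize]
  · obtain ⟨n, hn⟩ := exists_nat_gt (2 / (α * δ))
    have hn0 : 0 < n := by exact_mod_cast (by positivity : (0 : ℝ) < 2 / (α * δ)).trans hn
    obtain ⟨ψ, hψ, hsize, hpower⟩ :=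
      exists_isTest_prod_simulating_compProd h1 h2 hφ hn0 (half_pos hδ)
    have hsize' : ∫ p, ψ p ∂(P.prod P') ≤ α + 1 / n :=
      hsize.trans ((integral_natCeil_mul_div_le μ₁ ha n).trans (by linarith))
    have hloss : 1 / n / α ≤ δ / 2 := by
      rw [div_div, div_le_div_iff₀ (by positivity) two_pos]
      nlinarith [(div_lt_iff₀ (by positivity)).1 hn]
    linarith [tradeOff_le_of_integral_le_add (P.prod P') (Q.prod Q') hα0 (by positivity) hψ hsize']
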